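/- arXiv:2001.05906 — 2 statements merged into one kernel-verified Lean document; each statement's English description precedes it below -/
import Mathlib

section
/- Let Q ≪ P be probability measures on (Ω, F), let G ⊆ F be a sub-σ-field, and let C be a P-bounded subset of G-measurable nonnegative random variables. Then every g in the Q-probability closure of C admits a G-measurable Q-version g′, i.e. a G-measurable random variable g′ with Q[g = g′] = 1, and g′ can be chosen in the P-closure of the P-solid hull of C. -/
/-!
Along a subsequence the approximants converge `Q`-a.s., and their `limsup` is a `G`-measurable
`Q`-version `φ` of `g`. Let `B ∈ G` be the set where the density of `Q` with respect to `P` on `G`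
is positive: it carries all of `Q`, and on `B` the restriction of `P` to `G` is absolutely
continuous with respect to `Q`. Since convergence in measure is characterised by a.s. convergence
of sub-subsequences, it passes from `Q` to `P` for `G`-measurable functions supported in `B`. So
the truncations `1_B min(f_k, φ)`, which lie in the solid hull, converge in `P`-probability to
`1_B φ`.
-/

open MeasureTheory Filter Set
open scoped ENNReal Topology

/-- A set of random variables is bounded in probability with respect to a measure. -/
def BddInProb {Ω : Type*} [MeasurableSpace Ω] (P : Measure Ω) (C : Set (Ω → ℝ)) : Prop :=
  ∀ ε : ℝ, 0 < ε → ∃ M : ℝ, 0 < M ∧ ∀ f ∈ C, P {ω | M ≤ |f ω|} ≤ ENNReal.ofReal ε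

/-- The closure of `C` with respect to convergence in probability. -/
def ClInProb {Ω : Type*} [MeasurableSpace Ω] (P : Measure Ω) (C : Set (Ω → ℝ)) :
    Set (Ω → ℝ) :=
  {g | ∃ f : ℕ → Ω → ℝ, (∀ n, f n ∈ C) ∧ TendstoInMeasure P f atTop g}

/-- The `P`-solid hull of a set of nonnegative random variables. -/
def SolidHull {Ω : Type*} [MeasurableSpace Ω] (P : Measure Ω) (C : Set (Ω → ℝ)) :
    Set (Ω → ℝ) :=
  {g | (∀ ω, 0 ≤ g ω) ∧ ∃ f ∈ C, ∀ᵐ ω ∂P, g ω ≤ f ω}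

theorem toReal_limsup_ofReal_of_tendsto {ι : Type*} {l : Filter ι} [l.NeBot] {u : ι → ℝ} {x : ℝ}
    (hu : ∀ i, 0 ≤ u i) (h : Tendsto u l (𝓝 x)) :
    (limsup (fun i => ENNReal.ofReal (u i)) l).toReal = x := by
  rw [(ENNReal.tendsto_ofReal h).limsup_eq, ENNReal.toReal_ofReal (ge_of_tendsto' h hu)]

namespace MeasureTheory

variable {α ι E : Type*} {m m0 : MeasurableSpace α}

theorem Measure.AbsolutelyContinuous.exists_ae_mem_restrict_absolutelyContinuous
    {ν μ : Measure α} [ν.HaveLebesgueDecomposition μ] (hνμ : ν ≪ μ) :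
    ∃ s, MeasurableSet s ∧ (∀ᵐ x ∂ν, x ∈ s) ∧ μ.restrict s ≪ ν := by
  set s := {x | 0 < ν.rnDeriv μ x}
  have hs : MeasurableSet s := measurableSet_lt measurable_const (ν.measurable_rnDeriv μ)
  refine ⟨s, hs, Measure.rnDeriv_pos hνμ, ?_⟩
  have hle : (μ.restrict s).withDensity (ν.rnDeriv μ) ≤ ν := by
    rw [← restrict_withDensity hs, Measure.withDensity_rnDeriv_eq ν μ hνμ]
    exact Measure.restrict_le_self
  exact (withDensity_absolutelyContinuous' (ν.measurable_rnDeriv μ).aemeasurable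
    (ae_restrict_of_forall_mem hs fun _ hx => hx.ne')).trans
    (Measure.absolutelyContinuous_of_le hle)

theorem TendstoInMeasure.of_absolutelyContinuous [PseudoEMetricSpace E] {μ ν : Measure α}
    [IsFiniteMeasure μ] {f : ℕ → α → E} {g : α → E} (hμν : μ ≪ ν)
    (hf : ∀ n, AEStronglyMeasurable (f n) μ) (h : TendstoInMeasure ν f atTop g) :
    TendstoInMeasure μ f atTop g := by
  refine (exists_seq_tendstoInMeasure_atTop_iff hf).2 fun ns hns => ?_
  obtain ⟨ns', hns', hae⟩ := (h.comp hns.tendsto_atTop).exists_seq_tendsto_ae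
  exact ⟨ns', hns', hμν.ae_le hae⟩

theorem tendstoInMeasure_trim_iff [EDist E] (hm : m ≤ m0) {μ : Measure α} {l : Filter ι}
    {f : ι → α → E} {g : α → E} (hfg : ∀ i, Measurable[m] fun x => edist (f i x) (g x)) :
    TendstoInMeasure (μ.trim hm) f l g ↔ TendstoInMeasure μ f l g := by
  have htrim : ∀ ε i, μ.trim hm {x | ε ≤ edist (f i x) (g x)} = μ {x | ε ≤ edist (f i x) (g x)} :=
    fun ε i => trim_measurableSet_eq hm (measurableSet_le measurable_const (hfg i))
  simp only [TendstoInMeasure, htrim]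

theorem TendstoInMeasure.indicator_of_restrict [PseudoEMetricSpace E] [Zero E] {μ : Measure α}
    {l : Filter ι} {f : ι → α → E} {g : α → E} {s : Set α}
    (h : TendstoInMeasure (μ.restrict s) f l g) :
    TendstoInMeasure μ (fun i => s.indicator (f i)) l (s.indicator g) := by
  intro ε hε
  refine tendsto_of_tendsto_of_tendsto_of_le_of_le tendsto_const_nhds (h ε hε)
    (fun _ => zero_le) fun i => ?_
  calc μ {x | ε ≤ edist (s.indicator (f i) x) (s.indicator g x)}
      ≤ μ ({x | ε ≤ edist (f i x) (g x)} ∩ s) := measure_mono fun x hx => by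
        by_cases hxs : x ∈ s
        · simp_all
        · simp_all [hε.not_ge]
    _ ≤ μ.restrict s {x | ε ≤ edist (f i x) (g x)} := Measure.le_restrict_apply _ _

end MeasureTheory

theorem exists_measurable_version_in_closure_general {Ω : Type*} {F : MeasurableSpace Ω}
    (P Q : Measure Ω) [IsProbabilityMeasure P] [IsProbabilityMeasure Q]
    (hQP : Q ≪ P)
    (G : MeasurableSpace Ω) (hG : G ≤ F)
    (C : Set (Ω → ℝ))
    (hC_meas : ∀ f ∈ C, Measurable[G] f)
    (hC_nonneg : ∀ f ∈ C, ∀ ω, 0 ≤ f ω)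
    (g : Ω → ℝ) (hg : g ∈ @ClInProb Ω F Q C) :
    ∃ g' : Ω → ℝ, Measurable[G] g' ∧ (∀ᵐ ω ∂Q, g ω = g' ω) ∧
      g' ∈ @ClInProb Ω F P (@SolidHull Ω F P C) := by
  obtain ⟨f, hfC, hfQ⟩ := hg
  obtain ⟨ns, -, hfg⟩ := hfQ.exists_seq_tendsto_ae
  have hf_meas : ∀ k, Measurable[G] (f (ns k)) := fun k => hC_meas _ (hfC _)
  have hf_nonneg : ∀ k ω, 0 ≤ f (ns k) ω := fun k => hC_nonneg _ (hfC _)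
  set φ : Ω → ℝ := fun ω => (limsup (fun k => ENNReal.ofReal (f (ns k) ω)) atTop).toReal
  have hφ_meas : Measurable[G] φ :=
    (Measurable.limsup fun k => ENNReal.measurable_ofReal.comp (hf_meas k)).ennreal_toReal
  have hgφ : ∀ᵐ ω ∂Q, g ω = φ ω :=
    hfg.mono fun ω h => (toReal_limsup_ofReal_of_tendsto (hf_nonneg · ω) h).symm
  have hmin_meas : ∀ k, Measurable[G] (min (f (ns k)) φ) := fun k => (hf_meas k).min hφ_meas
  obtain ⟨B, hB, hQB, hPB⟩ := (hQP.trim hG).exists_ae_mem_restrict_absolutelyContinuous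
  have hmin : TendstoInMeasure ((P.trim hG).restrict B) (fun k => min (f (ns k)) φ) atTop φ := by
    refine TendstoInMeasure.of_absolutelyContinuous hPB
      (fun k => (hmin_meas k).aestronglyMeasurable) ?_
    rw [tendstoInMeasure_trim_iff hG fun k => (hmin_meas k).edist hφ_meas]
    refine tendstoInMeasure_of_tendsto_ae
      (fun k => ((hmin_meas k).mono hG le_rfl).aestronglyMeasurable) ?_
    filter_upwards [hfg, hgφ] with ω hω hωφ
    simpa [hωφ] using hω.min (tendsto_const_nhds (x := φ ω))
  refine ⟨B.indicator φ, hφ_meas.indicator hB, ?_,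
    fun k => B.indicator (min (f (ns k)) φ), fun k => ⟨?_, f (ns k), hfC _, ae_of_all _ ?_⟩, ?_⟩
  · filter_upwards [hgφ, ae_of_ae_trim hG hQB] with ω hω hωB
    rw [indicator_of_mem hωB, hω]
  · exact indicator_nonneg fun ω _ => le_min (hf_nonneg k ω) ENNReal.toReal_nonneg
  · exact indicator_le' (fun ω _ => min_le_left _ _) fun ω _ => hf_nonneg k ω
  · rw [← tendstoInMeasure_trim_iff hG fun k =>
      ((hmin_meas k).indicator hB).edist (hφ_meas.indicator hB)]
    exact hmin.indicator_of_restrict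

theorem exists_measurable_version_in_closure {Ω : Type*} {F : MeasurableSpace Ω}
    (P Q : Measure Ω) [IsProbabilityMeasure P] [IsProbabilityMeasure Q]
    (hQP : Q ≪ P)
    (G : MeasurableSpace Ω) (hG : G ≤ F)
    (C : Set (Ω → ℝ))
    (hC_meas : ∀ f ∈ C, Measurable[G] f)
    (hC_nonneg : ∀ f ∈ C, ∀ ω, 0 ≤ f ω)
    (hC : @BddInProb Ω F P C)
    (g : Ω → ℝ) (hg : g ∈ @ClInProb Ω F Q C) :
    ∃ g' : Ω → ℝ, Measurable[G] g' ∧ (∀ᵐ ω ∂Q, g ω = g' ω) ∧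
      g' ∈ @ClInProb Ω F P (@SolidHull Ω F P C) :=
  exists_measurable_version_in_closure_general P Q hQP G hG C hC_meas hC_nonneg g hg
end

section
/- Let (Ω, F, P) be a probability space, let (A_i)_{i∈I} be a countable measurable partition of Ω with P[A_i] > 0 for each i, and write Q_i := P[·|A_i]. Suppose that for each i, (Y^i_t)_{t∈I'} is a nonnegative process such that for all s ≤ t in a finite index set I', all X in a family X of nonnegative processes, and all A ∈ F_s, E_{Q_i}[(X_t Y^i_t)/(X_s Y^i_s) · 1_A] ≤ Q_i[A]. Define Z_t := Σ_i Y^i_t 1_{A_i}. Then for all s ≤ t, X ∈ X, and A ∈ F_s: E_P[(X_t Z_t)/(X_s Z_s) · 1_A] ≤ P[A]. Moreover, if each Y^i is strictly positive Q_i-a.s., then Z is strictly positive P-a.s. -/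
open MeasureTheory ProbabilityTheory Filter Set
open scoped ENNReal Topology

/-!
On each cell `A i` the pasted process `Z` coincides with `Y i`, and `P[A i] • P[·|A i]` is the
restriction of `P` to `A i`. Multiplying the local inequality under `P[·|A i]` by `P[A i]` therefore
gives the inequality for `Z` on `B ∩ A i` under `P`, and summing over the countable partition gives
it on `B`. Positivity is pasted in the same way, since a countable union of null sets is null.
-/

lemma tsum_indicator_apply_of_mem {ι Ω M : Type*} [AddCommMonoid M] [TopologicalSpace M]
    {A : ι → Set Ω} (hA : Pairwise (Function.onFun Disjoint A)) (g : ι → Ω → M) {i : ι} {ω : Ω}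
    (hω : ω ∈ A i) : ∑' j, (A j).indicator (g j) ω = g i ω := by
  rw [tsum_eq_single i fun j hj ↦
    indicator_of_notMem (fun hωj ↦ (hA hj).notMem_of_mem_left hωj hω) _]
  exact indicator_of_mem hω _

section Conditioning

variable {Ω : Type*} [MeasurableSpace Ω] {μ : Measure Ω} [IsFiniteMeasure μ] {S : Set Ω}

lemma measure_smul_cond (hS : MeasurableSet S) : μ S • μ[|S] = μ.restrict S := by
  ext t ht
  rw [Measure.smul_apply, smul_eq_mul, mul_comm, cond_mul_eq_inter hS, Measure.restrict_apply ht,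
    inter_comm]

lemma setLIntegral_inter_eq_mul_setLIntegral_cond (hS : MeasurableSet S) (f : Ω → ℝ≥0∞)
    (B : Set Ω) : ∫⁻ ω in B ∩ S, f ω ∂μ = μ S * ∫⁻ ω in B, f ω ∂μ[|S] := by
  rw [← smul_eq_mul, ← lintegral_smul_measure, ← Measure.restrict_smul, measure_smul_cond hS,
    Measure.restrict_restrict' hS]

lemma setLIntegral_inter_le_measure_of_cond (hS : MeasurableSet S) {f : Ω → ℝ≥0∞} {B : Set Ω}
    (h : ∫⁻ ω in B, f ω ∂μ[|S] ≤ μ[B|S]) : ∫⁻ ω in B ∩ S, f ω ∂μ ≤ μ (B ∩ S) := by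
  rw [setLIntegral_inter_eq_mul_setLIntegral_cond hS, inter_comm, ← cond_mul_eq_inter hS, mul_comm]
  gcongr

lemma ae_imp_of_ae_cond (hS : MeasurableSet S) {p : Ω → Prop} (h : ∀ᵐ ω ∂μ[|S], p ω) :
    ∀ᵐ ω ∂μ, ω ∈ S → p ω := by
  have h_abs : μ.restrict S ≪ μ[|S] :=
    measure_smul_cond (μ := μ) hS ▸ Measure.smul_absolutelyContinuous
  exact (ae_restrict_iff' hS).mp (h_abs.ae_le h)

end Conditioning

section Partition

variable {Ω ι : Type*} [MeasurableSpace Ω] [Countable ι] {μ : Measure Ω} {A : ι → Set Ω}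

lemma setLIntegral_le_measure_of_partition (hA_meas : ∀ i, MeasurableSet (A i))
    (hA_disj : Pairwise (Function.onFun Disjoint A)) (hA_cover : ⋃ i, A i = univ) {f : Ω → ℝ≥0∞}
    {B : Set Ω} (hB : MeasurableSet B) (h : ∀ i, ∫⁻ ω in B ∩ A i, f ω ∂μ ≤ μ (B ∩ A i)) :
    ∫⁻ ω in B, f ω ∂μ ≤ μ B := by
  have hBA_meas : ∀ i, MeasurableSet (B ∩ A i) := fun i ↦ hB.inter (hA_meas i)
  have hBA_disj : Pairwise (Function.onFun Disjoint fun i ↦ B ∩ A i) :=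
    fun i j hij ↦ (hA_disj hij).mono inter_subset_right inter_subset_right
  have hB_eq : B = ⋃ i, B ∩ A i := by rw [← inter_iUnion, hA_cover, inter_univ]
  calc ∫⁻ ω in B, f ω ∂μ = ∑' i, ∫⁻ ω in B ∩ A i, f ω ∂μ := by
        conv_lhs => rw [hB_eq]
        exact lintegral_iUnion hBA_meas hBA_disj f
    _ ≤ ∑' i, μ (B ∩ A i) := ENNReal.tsum_le_tsum h
    _ = μ B := by rw [← measure_iUnion hBA_disj hBA_meas, ← hB_eq]

lemma ae_of_forall_ae_cond [IsFiniteMeasure μ] (hA_meas : ∀ i, MeasurableSet (A i))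
    (hA_cover : ⋃ i, A i = univ) {p : Ω → Prop} (h : ∀ i, ∀ᵐ ω ∂μ[|A i], p ω) :
    ∀ᵐ ω ∂μ, p ω := by
  have hA : ∀ᵐ ω ∂μ, ∀ i, ω ∈ A i → p ω :=
    ae_all_iff.mpr fun i ↦ ae_imp_of_ae_cond (hA_meas i) (h i)
  filter_upwards [hA] with ω hω
  obtain ⟨i, hi⟩ := mem_iUnion.mp (hA_cover ▸ mem_univ ω)
  exact hω i hi

end Partition

theorem pasting_local_deflators_general
    {Ω : Type*} [m0 : MeasurableSpace Ω]
    (P : Measure Ω) [IsProbabilityMeasure P]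
    {ι : Type*} [Countable ι]
    (A : ι → Set Ω)
    (hA_meas : ∀ i, MeasurableSet (A i))
    (hA_disj : Pairwise (Function.onFun Disjoint A))
    (hA_cover : (⋃ i, A i) = univ)
    (T : ℕ) (ℱ : ℕ → MeasurableSpace Ω) (hℱ : ∀ t, ℱ t ≤ m0)
    (Y : ι → ℕ → Ω → ℝ)
    (𝒳 : Set (ℕ → Ω → ℝ))
    -- local generalized supermartingale deflator property under each `Qᵢ := P[·|Aᵢ]`;
    -- quotients use Lean's convention `0/0 = 0`
    (hY : ∀ i, ∀ s t, s ≤ t → t ≤ T → ∀ X ∈ 𝒳, ∀ B : Set Ω, MeasurableSet[ℱ s] B →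
      ∫⁻ ω in B, ENNReal.ofReal (X t ω * Y i t ω / (X s ω * Y i s ω))
          ∂(ProbabilityTheory.cond P (A i))
        ≤ ProbabilityTheory.cond P (A i) B) :
    (∀ s t, s ≤ t → t ≤ T → ∀ X ∈ 𝒳, ∀ B : Set Ω, MeasurableSet[ℱ s] B →
      ∫⁻ ω in B,
          ENNReal.ofReal (X t ω * (∑' i, Set.indicator (A i) (Y i t) ω)
            / (X s ω * (∑' i, Set.indicator (A i) (Y i s) ω))) ∂P
        ≤ P B) ∧
    ((∀ i, ∀ t ≤ T, ∀ᵐ ω ∂(ProbabilityTheory.cond P (A i)), 0 < Y i t ω) →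
      ∀ t ≤ T, ∀ᵐ ω ∂P, 0 < ∑' i, Set.indicator (A i) (Y i t) ω) := by
  have hZ : ∀ i u ω, ω ∈ A i → ∑' j, (A j).indicator (Y j u) ω = Y i u ω :=
    fun i u _ hω ↦ tsum_indicator_apply_of_mem hA_disj (fun j ↦ Y j u) hω
  refine ⟨fun s t hst htT X hX B hB ↦ ?_, fun hpos t htT ↦ ?_⟩
  · refine setLIntegral_le_measure_of_partition hA_meas hA_disj hA_cover (hℱ s B hB) fun i ↦ ?_
    rw [setLIntegral_congr_fun ((hℱ s B hB).inter (hA_meas i))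
      fun ω hω ↦ by rw [hZ i t ω hω.2, hZ i s ω hω.2]]
    exact setLIntegral_inter_le_measure_of_cond (hA_meas i) (hY i s t hst htT X hX B hB)
  · refine ae_of_forall_ae_cond hA_meas hA_cover fun i ↦ ?_
    filter_upwards [hpos i t htT, ae_cond_mem (hA_meas i)] with ω hY_pos hω
    rwa [hZ i t ω hω]

theorem pasting_local_deflators
    {Ω : Type*} [m0 : MeasurableSpace Ω]
    (P : Measure Ω) [IsProbabilityMeasure P]
    {ι : Type*} [Countable ι]
    (A : ι → Set Ω)
    (hA_meas : ∀ i, MeasurableSet (A i))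
    (hA_disj : Pairwise (Function.onFun Disjoint A))
    (hA_cover : (⋃ i, A i) = univ)
    (hA_pos : ∀ i, 0 < P (A i))
    (T : ℕ) (ℱ : ℕ → MeasurableSpace Ω) (hℱ : ∀ t, ℱ t ≤ m0)
    (Y : ι → ℕ → Ω → ℝ)
    (hY_nonneg : ∀ i t ω, 0 ≤ Y i t ω)
    (𝒳 : Set (ℕ → Ω → ℝ))
    (h𝒳 : ∀ X ∈ 𝒳, (∀ t ω, 0 ≤ X t ω) ∧
      ∀ s t, s ≤ t → X s ⁻¹' {0} ⊆ X t ⁻¹' {0})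
    -- local generalized supermartingale deflator property under each `Qᵢ := P[·|Aᵢ]`;
    -- quotients use Lean's convention `0/0 = 0`
    (hY : ∀ i, ∀ s t, s ≤ t → t ≤ T → ∀ X ∈ 𝒳, ∀ B : Set Ω, MeasurableSet[ℱ s] B →
      ∫⁻ ω in B, ENNReal.ofReal (X t ω * Y i t ω / (X s ω * Y i s ω))
          ∂(ProbabilityTheory.cond P (A i))
        ≤ ProbabilityTheory.cond P (A i) B) :
    (∀ s t, s ≤ t → t ≤ T → ∀ X ∈ 𝒳, ∀ B : Set Ω, MeasurableSet[ℱ s] B →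
      ∫⁻ ω in B,
          ENNReal.ofReal (X t ω * (∑' i, Set.indicator (A i) (Y i t) ω)
            / (X s ω * (∑' i, Set.indicator (A i) (Y i s) ω))) ∂P
        ≤ P B) ∧
    ((∀ i, ∀ t ≤ T, ∀ᵐ ω ∂(ProbabilityTheory.cond P (A i)), 0 < Y i t ω) →
      ∀ t ≤ T, ∀ᵐ ω ∂P, 0 < ∑' i, Set.indicator (A i) (Y i t) ω) :=
  pasting_local_deflators_general (m0 := m0) P A hA_meas hA_disj hA_cover T ℱ hℱ Y 𝒳 hY
end
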